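/- arXiv:2506.14780 — 4 statements merged into one kernel-verified Lean document; each statement's English description precedes it below -/
import Mathlib

section
/- Monotonicity of a Sinkhorn sweep for the semi-dual objective: for every f : Fin n → ℝ, one full Sinkhorn–Knopp iteration does not decrease the semi-dual value, i.e. setting g = f^{C,ε} and f' = g^{C,ε} = (f^{C,ε})^{C,ε}, one has Q^semi_ε(f') ≥ Q_ε(f', g) ≥ Q_ε(f, g) = Q^semi_ε(f); in particular Q^semi_ε((f^{C,ε})^{C,ε}) ≥ Q^semi_ε(f). -/
open Real

noncomputable def Qdual {n m : ℕ} (α : Fin n → ℝ) (β : Fin m → ℝ)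
    (C : Fin n → Fin m → ℝ) (ε : ℝ) (f : Fin n → ℝ) (g : Fin m → ℝ) : ℝ :=
  (∑ i, α i * f i) + (∑ j, β j * g j)
    - ε * ((∑ i, ∑ j, α i * β j * Real.exp ((f i + g j - C i j) / ε)) - 1)

noncomputable def transformF {n m : ℕ} (α : Fin n → ℝ) (C : Fin n → Fin m → ℝ)
    (ε : ℝ) (f : Fin n → ℝ) : Fin m → ℝ :=
  fun j => -ε * Real.log (∑ i, α i * Real.exp ((f i - C i j) / ε))

noncomputable def transformG {n m : ℕ} (β : Fin m → ℝ) (C : Fin n → Fin m → ℝ)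
    (ε : ℝ) (g : Fin m → ℝ) : Fin n → ℝ :=
  fun i => -ε * Real.log (∑ j, β j * Real.exp ((g j - C i j) / ε))

noncomputable def Qsemi {n m : ℕ} (α : Fin n → ℝ) (β : Fin m → ℝ)
    (C : Fin n → Fin m → ℝ) (ε : ℝ) (f : Fin n → ℝ) : ℝ :=
  (∑ i, α i * f i) + ∑ j, β j * transformF α C ε f j

lemma sinkhorn_key {ε : ℝ} (hε : 0 < ε) {S : ℝ} (hS : 0 < S) (t : ℝ) :
    t - ε * (S * Real.exp (t / ε)) ≤ -ε * Real.log S - ε := by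
  have h1 := Real.add_one_le_exp (t / ε + Real.log S)
  rw [Real.exp_add, Real.exp_log hS] at h1
  have ht : ε * (t / ε) = t := by rw [mul_comm, div_mul_cancel₀ _ hε.ne']
  have h2 : ε * (t / ε + Real.log S + 1) ≤ ε * (Real.exp (t / ε) * S) :=
    mul_le_mul_of_nonneg_left h1 hε.le
  have h3 : ε * (t / ε + Real.log S + 1) = t + ε * Real.log S + ε := by
    rw [mul_add, mul_add, ht]; ring
  have h4 : ε * (Real.exp (t / ε) * S) = ε * (S * Real.exp (t / ε)) := by ring
  linarith

lemma sinkhorn_key_eq {ε : ℝ} (hε : 0 < ε) {S : ℝ} (hS : 0 < S) :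
    (-ε * Real.log S) - ε * (S * Real.exp ((-ε * Real.log S) / ε)) = -ε * Real.log S - ε := by
  have h1 : (-ε * Real.log S) / ε = -Real.log S := by
    rw [neg_mul, neg_div, mul_div_cancel_left₀ _ hε.ne']
  rw [h1, Real.exp_neg, Real.exp_log hS, mul_inv_cancel₀ hS.ne', mul_one]

lemma Qdual_eq_i {n m : ℕ} (α : Fin n → ℝ) (β : Fin m → ℝ)
    (C : Fin n → Fin m → ℝ) (ε : ℝ) (f : Fin n → ℝ) (g : Fin m → ℝ) :
    Qdual α β C ε f g =
      (∑ i, α i * (f i - ε * ((∑ j, β j * Real.exp ((g j - C i j) / ε)) * Real.exp (f i / ε))))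
        + (∑ j, β j * g j) + ε := by
  unfold Qdual
  have hE : ∀ i ∈ Finset.univ, ∑ j, α i * β j * Real.exp ((f i + g j - C i j) / ε)
      = α i * ((∑ j, β j * Real.exp ((g j - C i j) / ε)) * Real.exp (f i / ε)) := by
    intro i _
    rw [Finset.sum_mul, Finset.mul_sum]
    refine Finset.sum_congr rfl fun j _ => ?_
    rw [show (f i + g j - C i j) / ε = (g j - C i j) / ε + f i / ε by ring, Real.exp_add]
    ring
  rw [Finset.sum_congr rfl hE]
  have h2 : ∑ i, α i * (f i - ε * ((∑ j, β j * Real.exp ((g j - C i j) / ε)) * Real.exp (f i / ε)))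
      = (∑ i, α i * f i)
        - ε * ∑ i, α i * ((∑ j, β j * Real.exp ((g j - C i j) / ε)) * Real.exp (f i / ε)) := by
    rw [Finset.mul_sum, ← Finset.sum_sub_distrib]
    exact Finset.sum_congr rfl fun i _ => by ring
  rw [h2]; ring

lemma Qdual_eq_j {n m : ℕ} (α : Fin n → ℝ) (β : Fin m → ℝ)
    (C : Fin n → Fin m → ℝ) (ε : ℝ) (f : Fin n → ℝ) (g : Fin m → ℝ) :
    Qdual α β C ε f g =
      (∑ i, α i * f i)
        + (∑ j, β j * (g j - ε * ((∑ i, α i * Real.exp ((f i - C i j) / ε)) * Real.exp (g j / ε))))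
        + ε := by
  unfold Qdual
  rw [Finset.sum_comm]
  have hE : ∀ j ∈ Finset.univ, ∑ i, α i * β j * Real.exp ((f i + g j - C i j) / ε)
      = β j * ((∑ i, α i * Real.exp ((f i - C i j) / ε)) * Real.exp (g j / ε)) := by
    intro j _
    rw [Finset.sum_mul, Finset.mul_sum]
    refine Finset.sum_congr rfl fun i _ => ?_
    rw [show (f i + g j - C i j) / ε = (f i - C i j) / ε + g j / ε by ring, Real.exp_add]
    ring
  rw [Finset.sum_congr rfl hE]
  have h2 : ∑ j, β j * (g j - ε * ((∑ i, α i * Real.exp ((f i - C i j) / ε)) * Real.exp (g j / ε)))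
      = (∑ j, β j * g j)
        - ε * ∑ j, β j * ((∑ i, α i * Real.exp ((f i - C i j) / ε)) * Real.exp (g j / ε)) := by
    rw [Finset.mul_sum, ← Finset.sum_sub_distrib]
    exact Finset.sum_congr rfl fun j _ => by ring
  rw [h2]; ring

/-- With `g = f^{C,ε}`, the dual equals the semi-dual. -/
lemma Qdual_transformF {n m : ℕ} (hn : 0 < n) (α : Fin n → ℝ) (β : Fin m → ℝ)
    (hα : ∀ i, 0 < α i) (hβs : ∑ j, β j = 1)
    (C : Fin n → Fin m → ℝ) {ε : ℝ} (hε : 0 < ε) (f : Fin n → ℝ) :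
    Qdual α β C ε f (transformF α C ε f) = Qsemi α β C ε f := by
  have : Nonempty (Fin n) := ⟨⟨0, hn⟩⟩
  rw [Qdual_eq_j α β C ε f (transformF α C ε f)]
  unfold Qsemi
  have h : ∀ j ∈ Finset.univ,
      β j * (transformF α C ε f j
        - ε * ((∑ i, α i * Real.exp ((f i - C i j) / ε)) * Real.exp (transformF α C ε f j / ε)))
      = β j * transformF α C ε f j - β j * ε := by
    intro j _
    set S := ∑ i, α i * Real.exp ((f i - C i j) / ε) with hSdef
    have hS : 0 < S := Finset.sum_pos (fun i _ => mul_pos (hα i) (Real.exp_pos _)) Finset.univ_nonempty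
    have : transformF α C ε f j = -ε * Real.log S := rfl
    rw [this, sinkhorn_key_eq hε hS]
    ring
  rw [Finset.sum_congr rfl h, Finset.sum_sub_distrib]
  have hsum : ∑ j, β j * ε = ε := by rw [← Finset.sum_mul, hβs, one_mul]
  rw [hsum]; ring

/-- Monotonicity of a Sinkhorn sweep for the semi-dual objective: with
`g = f^{C,ε}` and `f' = g^{C,ε}`, one has
`Q^semi_ε(f') ≥ Q_ε(f',g) ≥ Q_ε(f,g) = Q^semi_ε(f)`; in particular
`Q^semi_ε((f^{C,ε})^{C,ε}) ≥ Q^semi_ε(f)`. -/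
theorem sinkhorn_sweep_monotone
    {n m : ℕ} (hn : 0 < n) (hm : 0 < m)
    (α : Fin n → ℝ) (β : Fin m → ℝ)
    (hα : ∀ i, 0 < α i) (hβ : ∀ j, 0 < β j)
    (hαs : ∑ i, α i = 1) (hβs : ∑ j, β j = 1)
    (C : Fin n → Fin m → ℝ) (ε : ℝ) (hε : 0 < ε)
    (f : Fin n → ℝ) :
    Qsemi α β C ε (transformG β C ε (transformF α C ε f))
        ≥ Qdual α β C ε (transformG β C ε (transformF α C ε f)) (transformF α C ε f) ∧
    Qdual α β C ε (transformG β C ε (transformF α C ε f)) (transformF α C ε f)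
        ≥ Qdual α β C ε f (transformF α C ε f) ∧
    Qdual α β C ε f (transformF α C ε f) = Qsemi α β C ε f ∧
    Qsemi α β C ε (transformG β C ε (transformF α C ε f)) ≥ Qsemi α β C ε f := by
  have hNn : Nonempty (Fin n) := ⟨⟨0, hn⟩⟩
  have hNm : Nonempty (Fin m) := ⟨⟨0, hm⟩⟩
  set g := transformF α C ε f with hg
  set f' := transformG β C ε g with hf'
  -- Fact 3
  have fact3 : Qdual α β C ε f g = Qsemi α β C ε f := Qdual_transformF hn α β hα hβs C hε f
  -- Fact 2 : monotone in f
  have fact2 : Qdual α β C ε f' g ≥ Qdual α β C ε f g := by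
    rw [Qdual_eq_i α β C ε f g, Qdual_eq_i α β C ε f' g]
    refine add_le_add_left (add_le_add_left (Finset.sum_le_sum fun i _ => ?_) _) _
    refine mul_le_mul_of_nonneg_left ?_ (hα i).le
    set S := ∑ j, β j * Real.exp ((g j - C i j) / ε) with hSdef
    have hS : 0 < S := Finset.sum_pos (fun j _ => mul_pos (hβ j) (Real.exp_pos _)) Finset.univ_nonempty
    have hfi : f' i = -ε * Real.log S := rfl
    calc f i - ε * (S * Real.exp (f i / ε)) ≤ -ε * Real.log S - ε := sinkhorn_key hε hS (f i)
      _ = f' i - ε * (S * Real.exp (f' i / ε)) := by rw [hfi, sinkhorn_key_eq hε hS]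
  -- Fact 1 : Qsemi f' = Qdual f' (transformF f') ≥ Qdual f' g  (monotone in g)
  have fact1 : Qsemi α β C ε f' ≥ Qdual α β C ε f' g := by
    rw [← Qdual_transformF hn α β hα hβs C hε f']
    rw [Qdual_eq_j α β C ε f' g, Qdual_eq_j α β C ε f' (transformF α C ε f')]
    refine add_le_add_left (add_le_add_right (Finset.sum_le_sum fun j _ => ?_) _) _
    refine mul_le_mul_of_nonneg_left ?_ (hβ j).le
    set T := ∑ i, α i * Real.exp ((f' i - C i j) / ε) with hTdef
    have hT : 0 < T := Finset.sum_pos (fun i _ => mul_pos (hα i) (Real.exp_pos _)) Finset.univ_nonempty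
    have hgj : transformF α C ε f' j = -ε * Real.log T := rfl
    calc g j - ε * (T * Real.exp (g j / ε)) ≤ -ε * Real.log T - ε := sinkhorn_key hε hT (g j)
      _ = transformF α C ε f' j - ε * (T * Real.exp (transformF α C ε f' j / ε)) := by
          rw [hgj, sinkhorn_key_eq hε hT]
  exact ⟨fact1, fact2, fact3, le_trans (fact3 ▸ fact2) fact1⟩
end

section
/- Strong concavity of the semi-dual objective for the oscillation seminorm: for every compact set K ⊂ ℝ^n there exists μ > 0 such that for all f, f' ∈ K, Q^semi_ε(f') ≤ Q^semi_ε(f) + DQ^semi_ε(f)[f' − f] − (μ/2)·‖f' − f‖_osc², where DQ^semi_ε(f)[h] denotes the directional derivative of Q^semi_ε at f in direction h. -/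
open Real

/-- Oscillation seminorm `‖h‖_osc = maxᵢ hᵢ − minᵢ hᵢ` on `ℝ^n`. -/
noncomputable def osc {n : ℕ} (h : Fin n → ℝ) : ℝ :=
  (⨆ i, h i) - ⨅ i, h i


section AuxEOT
open Finset

lemma var_identity {n : ℕ} (a v : Fin n → ℝ) :
    (∑ i, a i * v i ^ 2) * (∑ i, a i) - (∑ i, a i * v i) ^ 2
      = (1 / 2) * ∑ i, ∑ k, a i * a k * (v i - v k) ^ 2 := by
  have key : ∑ i, ∑ k, a i * a k * (v i - v k) ^ 2
      = ∑ i, ∑ k, ((a i * v i ^ 2) * a k + a i * (a k * v k ^ 2)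
          - 2 * ((a i * v i) * (a k * v k))) :=
    Finset.sum_congr rfl fun i _ => Finset.sum_congr rfl fun k _ => by ring
  have e1 : ∑ i, ∑ k, (a i * v i ^ 2) * a k = (∑ i, a i * v i ^ 2) * (∑ i, a i) :=
    (Finset.sum_mul_sum _ _ _ _).symm
  have e2 : ∑ i, ∑ k, a i * (a k * v k ^ 2) = (∑ i, a i) * (∑ i, a i * v i ^ 2) :=
    (Finset.sum_mul_sum _ _ _ _).symm
  have e3 : ∑ i, ∑ k, (a i * v i) * (a k * v k) = (∑ i, a i * v i) * (∑ i, a i * v i) :=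
    (Finset.sum_mul_sum _ _ _ _).symm
  have split : ∑ i, ∑ k, ((a i * v i ^ 2) * a k + a i * (a k * v k ^ 2)
          - 2 * ((a i * v i) * (a k * v k)))
      = (∑ i, ∑ k, (a i * v i ^ 2) * a k) + (∑ i, ∑ k, a i * (a k * v k ^ 2))
        - 2 * (∑ i, ∑ k, (a i * v i) * (a k * v k)) := by
    simp [Finset.sum_add_distrib, Finset.sum_sub_distrib, Finset.mul_sum]
  rw [key, split, e1, e2, e3]; ring

lemma extract_two {n : ℕ} (F : Fin n → Fin n → ℝ) (hF : ∀ i k, 0 ≤ F i k)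
    {a b : Fin n} (hab : a ≠ b) : F a b + F b a ≤ ∑ i, ∑ k, F i k := by
  have h1 : F a b ≤ ∑ k, F a k :=
    Finset.single_le_sum (fun k _ => hF a k) (Finset.mem_univ b)
  have h2 : F b a ≤ ∑ k, F b k :=
    Finset.single_le_sum (fun k _ => hF b k) (Finset.mem_univ a)
  have h3 : (∑ k, F a k) + (∑ k, F b k) ≤ ∑ i, ∑ k, F i k := by
    have := Finset.sum_le_sum_of_subset_of_nonneg (f := fun i => ∑ k, F i k)
      (Finset.subset_univ ({a, b} : Finset (Fin n)))
      (fun i _ _ => Finset.sum_nonneg fun k _ => hF i k)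
    rwa [Finset.sum_pair hab] at this
  linarith

lemma taylor_lb {g g' g'' : ℝ → ℝ} {c : ℝ}
    (hg : ∀ t, HasDerivAt g (g' t) t) (hg' : ∀ t, HasDerivAt g' (g'' t) t)
    (hc : ∀ t ∈ Set.Icc (0:ℝ) 1, c ≤ g'' t) :
    g 0 + g' 0 + c / 2 ≤ g 1 := by
  set q : ℝ → ℝ := fun t => g t - g 0 - t * g' 0 - c / 2 * t ^ 2 with hqdef
  set q' : ℝ → ℝ := fun t => g' t - g' 0 - c * t with hq'def
  have hq : ∀ t, HasDerivAt q (q' t) t := by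
    intro t
    have h1 : HasDerivAt (fun t : ℝ => c / 2 * t ^ 2) (c / 2 * (2 * t)) t := by
      simpa using (hasDerivAt_pow 2 t).const_mul (c / 2)
    have := (((hg t).sub_const (g 0)).sub ((hasDerivAt_id t).mul_const (g' 0))).sub h1
    exact this.congr_deriv (by simp only [hq'def]; ring)
  have hq' : ∀ t, HasDerivAt q' (g'' t - c) t := by
    intro t
    have := ((hg' t).sub_const (g' 0)).sub ((hasDerivAt_id t).const_mul c)
    exact this.congr_deriv (by ring)
  have m1 : MonotoneOn q' (Set.Icc 0 1) := by
    apply monotoneOn_of_deriv_nonneg (convex_Icc 0 1)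
    · exact fun t _ => (hq' t).continuousAt.continuousWithinAt
    · exact fun t _ => (hq' t).differentiableAt.differentiableWithinAt
    · intro t ht
      rw [(hq' t).deriv]
      rw [interior_Icc] at ht
      have := hc t ⟨le_of_lt ht.1, le_of_lt ht.2⟩
      linarith
  have hq'0 : q' 0 = 0 := by simp [hq'def]
  have hq'nonneg : ∀ t ∈ Set.Icc (0:ℝ) 1, 0 ≤ q' t := by
    intro t ht
    have := m1 (Set.left_mem_Icc.mpr zero_le_one) ht ht.1
    rw [hq'0] at this; exact this
  have m2 : MonotoneOn q (Set.Icc 0 1) := by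
    apply monotoneOn_of_deriv_nonneg (convex_Icc 0 1)
    · exact fun t _ => (hq t).continuousAt.continuousWithinAt
    · exact fun t _ => (hq t).differentiableAt.differentiableWithinAt
    · intro t ht
      rw [(hq t).deriv]
      rw [interior_Icc] at ht
      exact hq'nonneg t ⟨le_of_lt ht.1, le_of_lt ht.2⟩
  have := m2 (Set.left_mem_Icc.mpr zero_le_one) (Set.right_mem_Icc.mpr zero_le_one) zero_le_one
  simp only [hqdef] at this
  norm_num at this
  linarith


lemma hasDerivAt_S {n : ℕ} (α u v : Fin n → ℝ) (t : ℝ) :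
    HasDerivAt (fun t => ∑ i, α i * Real.exp (u i + t * v i))
      (∑ i, α i * v i * Real.exp (u i + t * v i)) t := by
  apply HasDerivAt.fun_sum
  intro i _
  have h1 : HasDerivAt (fun t : ℝ => u i + t * v i) (v i) t := by
    simpa using (hasDerivAt_id t).mul_const (v i)
  have := (h1.exp).const_mul (α i)
  exact this.congr_deriv (by ring)

lemma hasDerivAt_S1 {n : ℕ} (α u v : Fin n → ℝ) (t : ℝ) :
    HasDerivAt (fun t => ∑ i, α i * v i * Real.exp (u i + t * v i))
      (∑ i, α i * v i ^ 2 * Real.exp (u i + t * v i)) t := by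
  apply HasDerivAt.fun_sum
  intro i _
  have h1 : HasDerivAt (fun t : ℝ => u i + t * v i) (v i) t := by
    simpa using (hasDerivAt_id t).mul_const (v i)
  have := (h1.exp).const_mul (α i * v i)
  exact this.congr_deriv (by ring)

lemma key_one {n : ℕ} [Nonempty (Fin n)] (α : Fin n → ℝ) (hα : ∀ i, 0 < α i)
    (hαs : ∑ i, α i = 1) (u v : Fin n → ℝ) (ε : ℝ) (hε : 0 < ε)
    (M amin : ℝ) (hamin : 0 < amin) (hmin : ∀ i, amin ≤ α i)
    (hM : ∀ t ∈ Set.Icc (0:ℝ) 1, ∀ i, |u i + t * v i| ≤ M)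
    (a b : Fin n) (ha : ∀ i, v i ≤ v a) (hb : ∀ i, v b ≤ v i) :
    ε * Real.log (∑ i, α i * Real.exp (u i + 0 * v i))
      + ε * ((∑ i, α i * v i * Real.exp (u i + 0 * v i))
              / (∑ i, α i * Real.exp (u i + 0 * v i)))
      + ε * amin ^ 2 * Real.exp (-(4 * M)) * (v a - v b) ^ 2 / 2
      ≤ ε * Real.log (∑ i, α i * Real.exp (u i + 1 * v i)) := by
  set S : ℝ → ℝ := fun t => ∑ i, α i * Real.exp (u i + t * v i) with hSdef
  set S1 : ℝ → ℝ := fun t => ∑ i, α i * v i * Real.exp (u i + t * v i) with hS1def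
  set S2 : ℝ → ℝ := fun t => ∑ i, α i * v i ^ 2 * Real.exp (u i + t * v i) with hS2def
  have hSpos : ∀ t, 0 < S t := fun t =>
    Finset.sum_pos (fun i _ => mul_pos (hα i) (Real.exp_pos _)) Finset.univ_nonempty
  set g : ℝ → ℝ := fun t => ε * Real.log (S t) with hgdef
  set g' : ℝ → ℝ := fun t => ε * (S1 t / S t) with hg'def
  set g'' : ℝ → ℝ := fun t => ε * ((S2 t * S t - S1 t * S1 t) / S t ^ 2) with hg''def
  have hg : ∀ t, HasDerivAt g (g' t) t := fun t =>
    ((hasDerivAt_S α u v t).log (hSpos t).ne').const_mul ε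
  have hg' : ∀ t, HasDerivAt g' (g'' t) t := fun t =>
    (((hasDerivAt_S1 α u v t)).div (hasDerivAt_S α u v t) (hSpos t).ne').const_mul ε
  have hc : ∀ t ∈ Set.Icc (0:ℝ) 1,
      ε * amin ^ 2 * Real.exp (-(4 * M)) * (v a - v b) ^ 2 ≤ g'' t := by
    intro t ht
    have hbd := hM t ht
    have helo : ∀ i, Real.exp (-M) ≤ Real.exp (u i + t * v i) := fun i =>
      Real.exp_le_exp.mpr (neg_le_of_abs_le (hbd i))
    have hehi : ∀ i, Real.exp (u i + t * v i) ≤ Real.exp M := fun i =>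
      Real.exp_le_exp.mpr (le_of_abs_le (hbd i))
    have hShi : S t ≤ Real.exp M := by
      calc S t ≤ ∑ i, α i * Real.exp M :=
            Finset.sum_le_sum fun i _ =>
              mul_le_mul_of_nonneg_left (hehi i) (hα i).le
        _ = Real.exp M := by rw [← Finset.sum_mul, hαs, one_mul]
    -- variance identity
    set e : Fin n → ℝ := fun i => Real.exp (u i + t * v i) with hedef
    have hvar : S2 t * S t - S1 t * S1 t
        = (1 / 2) * ∑ i, ∑ k, (α i * e i) * (α k * e k) * (v i - v k) ^ 2 := by
      have := var_identity (fun i => α i * e i) v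
      have e2 : (∑ i, (α i * e i) * v i ^ 2) = S2 t :=
        Finset.sum_congr rfl fun i _ => by simp [hS2def, hedef]; ring
      have e0 : (∑ i, α i * e i) = S t := rfl
      have e1 : (∑ i, (α i * e i) * v i) = S1 t :=
        Finset.sum_congr rfl fun i _ => by simp [hS1def, hedef]; ring
      rw [e2, e0, e1] at this
      linear_combination this
    have hFnn : ∀ i k, 0 ≤ (α i * e i) * (α k * e k) * (v i - v k) ^ 2 := by
      intro i k
      have h1 := (hα i).le
      have h2 := (hα k).le
      positivity
    have hnumnn : 0 ≤ S2 t * S t - S1 t * S1 t := by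
      rw [hvar]
      have : 0 ≤ ∑ i, ∑ k, (α i * e i) * (α k * e k) * (v i - v k) ^ 2 :=
        Finset.sum_nonneg fun i _ => Finset.sum_nonneg fun k _ => hFnn i k
      linarith
    by_cases hvab : v a = v b
    · have : (v a - v b) ^ 2 = 0 := by rw [hvab]; ring
      rw [this]
      have : 0 ≤ g'' t := by
        rw [hg''def]
        have := hSpos t
        positivity
      linarith
    · have hab : a ≠ b := fun hEq => hvab (by rw [hEq])
      have hnum : amin ^ 2 * Real.exp (-M) ^ 2 * (v a - v b) ^ 2
          ≤ S2 t * S t - S1 t * S1 t := by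
        rw [hvar]
        have htwo := extract_two _ hFnn hab
        have hterm : amin * Real.exp (-M) ≤ α a * e a :=
          mul_le_mul (hmin a) (helo a) (Real.exp_pos _).le (hα a).le
        have hterm' : amin * Real.exp (-M) ≤ α b * e b :=
          mul_le_mul (hmin b) (helo b) (Real.exp_pos _).le (hα b).le
        have hpos : (0:ℝ) < amin * Real.exp (-M) :=
          mul_pos hamin (Real.exp_pos _)
        have hFab : amin ^ 2 * Real.exp (-M) ^ 2 * (v a - v b) ^ 2
            ≤ (α a * e a) * (α b * e b) * (v a - v b) ^ 2 := by
          have h1 : amin ^ 2 * Real.exp (-M) ^ 2 ≤ (α a * e a) * (α b * e b) := by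
            have := mul_le_mul hterm hterm' hpos.le
              (le_trans hpos.le hterm)
            nlinarith
          nlinarith [sq_nonneg (v a - v b)]
        have hFba : 0 ≤ (α b * e b) * (α a * e a) * (v b - v a) ^ 2 := hFnn b a
        nlinarith
      -- combine with denominator bound
      rw [hg''def]
      have hS2le : S t ^ 2 ≤ Real.exp M ^ 2 := by
        have := hSpos t
        nlinarith
      have hexpM : (0:ℝ) < Real.exp M ^ 2 := by positivity
      have hStsq : (0:ℝ) < S t ^ 2 := by have := hSpos t; positivity
      have step1 : (S2 t * S t - S1 t * S1 t) / Real.exp M ^ 2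
          ≤ (S2 t * S t - S1 t * S1 t) / S t ^ 2 :=
        div_le_div_of_nonneg_left hnumnn hStsq hS2le
      have step2 : amin ^ 2 * Real.exp (-M) ^ 2 * (v a - v b) ^ 2 / Real.exp M ^ 2
          ≤ (S2 t * S t - S1 t * S1 t) / Real.exp M ^ 2 :=
        div_le_div_of_nonneg_right hnum hexpM.le
      have hratio : Real.exp (-M) ^ 2 / Real.exp M ^ 2 = Real.exp (-(4 * M)) := by
        rw [sq, sq, ← Real.exp_add, ← Real.exp_add, ← Real.exp_sub]
        ring_nf
      have heq : amin ^ 2 * Real.exp (-(4 * M)) * (v a - v b) ^ 2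
          = amin ^ 2 * Real.exp (-M) ^ 2 * (v a - v b) ^ 2 / Real.exp M ^ 2 := by
        rw [← hratio]; ring
      have hfinal : amin ^ 2 * Real.exp (-(4 * M)) * (v a - v b) ^ 2
          ≤ (S2 t * S t - S1 t * S1 t) / S t ^ 2 := by
        rw [heq]; linarith
      calc ε * amin ^ 2 * Real.exp (-(4 * M)) * (v a - v b) ^ 2
          = ε * (amin ^ 2 * Real.exp (-(4 * M)) * (v a - v b) ^ 2) := by ring
        _ ≤ ε * ((S2 t * S t - S1 t * S1 t) / S t ^ 2) :=
            mul_le_mul_of_nonneg_left hfinal hε.le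
  have := taylor_lb hg hg' hc
  simp only [hgdef, hg'def] at this
  linarith

end AuxEOT

/-- Strong concavity of the semi-dual objective for the oscillation seminorm:
for every compact `K ⊆ ℝ^n` there is `μ > 0` such that for all `f, f' ∈ K`,
`Q^semi_ε(f') ≤ Q^semi_ε(f) + DQ^semi_ε(f)[f'−f] − (μ/2)·‖f'−f‖_osc²`. -/
theorem semidual_strong_concavity_osc
    {n m : ℕ} (hn : 0 < n) (hm : 0 < m)
    (α : Fin n → ℝ) (β : Fin m → ℝ)
    (hα : ∀ i, 0 < α i) (hβ : ∀ j, 0 < β j)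
    (hαs : ∑ i, α i = 1) (hβs : ∑ j, β j = 1)
    (C : Fin n → Fin m → ℝ) (ε : ℝ) (hε : 0 < ε) :
    ∀ K : Set (Fin n → ℝ), IsCompact K →
      ∃ μ > (0 : ℝ), ∀ f ∈ K, ∀ f' ∈ K,
        Qsemi α β C ε f'
          ≤ Qsemi α β C ε f
            + deriv (fun t : ℝ => Qsemi α β C ε (fun i => f i + t * (f' i - f i))) 0
            - μ / 2 * (osc (f' - f)) ^ 2 := by
  intro K hK
  haveI : Nonempty (Fin n) := Fin.pos_iff_nonempty.mp hn
  obtain ⟨R0, hR0⟩ := hK.isBounded.exists_norm_le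
  set R := max R0 0 with hRdef
  have hR : ∀ f ∈ K, ∀ i, |f i| ≤ R := by
    intro f hf i
    have h1 : |f i| ≤ ‖f‖ := by
      simpa [Real.norm_eq_abs] using norm_le_pi_norm f i
    exact h1.trans ((hR0 f hf).trans (le_max_left _ _))
  set B := ∑ i, ∑ j, |C i j| with hBdef
  have hB : ∀ i j, |C i j| ≤ B := by
    intro i j
    refine le_trans (Finset.single_le_sum (f := fun j' => |C i j'|) (fun j' _ => abs_nonneg _) (Finset.mem_univ j)) ?_
    exact Finset.single_le_sum (f := fun i' => ∑ j', |C i' j'|)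
      (fun i' _ => Finset.sum_nonneg fun _ _ => abs_nonneg _) (Finset.mem_univ i)
  set M := (R + B) / ε with hMdef
  obtain ⟨i0, hi0⟩ := Finite.exists_min α
  set amin := α i0 with hamindef
  have hamin : 0 < amin := hα i0
  set μ := amin ^ 2 * Real.exp (-(4 * M)) / ε with hμdef
  have hμ : 0 < μ := by positivity
  refine ⟨μ, hμ, ?_⟩
  intro f hf f' hf'
  set h : Fin n → ℝ := fun i => f' i - f i with hhdef
  obtain ⟨a, hamax⟩ := Finite.exists_max h
  obtain ⟨b, hbmin⟩ := Finite.exists_min h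
  have hsub : f' - f = h := by funext i; simp [hhdef]
  have hosc : osc (f' - f) = h a - h b := by
    rw [hsub]
    unfold osc
    have h1 : (⨆ i, h i) = h a :=
      le_antisymm (ciSup_le fun i => hamax i)
        (le_ciSup (Set.Finite.bddAbove (Set.finite_range _)) a)
    have h2 : (⨅ i, h i) = h b :=
      le_antisymm (ciInf_le (Set.Finite.bddBelow (Set.finite_range _)) b)
        (le_ciInf fun i => hbmin i)
    rw [h1, h2]
  set v : Fin n → ℝ := fun i => h i / ε with hvdef
  set u : Fin m → Fin n → ℝ := fun j i => (f i - C i j) / ε with hudef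
  have hMbd : ∀ j, ∀ t ∈ Set.Icc (0:ℝ) 1, ∀ i, |u j i + t * v i| ≤ M := by
    intro j t ht i
    have hexp : u j i + t * v i = (f i + t * h i - C i j) / ε := by
      simp only [hudef, hvdef]
      field_simp
      ring
    rw [hexp, abs_div, abs_of_pos hε, hMdef]
    apply div_le_div_of_nonneg_right ?_ hε.le
    have h1 : |f i + t * h i| ≤ R := by
      have he : f i + t * h i = (1 - t) * f i + t * f' i := by simp [hhdef]; ring
      rw [he]
      calc |(1 - t) * f i + t * f' i| ≤ |(1 - t) * f i| + |t * f' i| := abs_add_le _ _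
        _ = (1 - t) * |f i| + t * |f' i| := by
            rw [abs_mul, abs_mul, abs_of_nonneg (by linarith [ht.2] : (0:ℝ) ≤ 1 - t),
              abs_of_nonneg ht.1]
        _ ≤ (1 - t) * R + t * R := by
            have := hR f hf i
            have := hR f' hf' i
            have h1t : (0:ℝ) ≤ 1 - t := by linarith [ht.2]
            have := ht.1
            gcongr <;> assumption
        _ = R := by ring
    calc |f i + t * h i - C i j| ≤ |f i + t * h i| + |C i j| := abs_sub _ _
      _ ≤ R + B := add_le_add h1 (hB i j)
  have hva : ∀ i, v i ≤ v a := fun i => div_le_div_of_nonneg_right (hamax i) hε.le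
  have hvb : ∀ i, v b ≤ v i := fun i => div_le_div_of_nonneg_right (hbmin i) hε.le
  have hkey := fun j => key_one α hα hαs (u j) v ε hε M amin hamin hi0 (hMbd j) a b hva hvb
  -- abbreviations
  set S0 : Fin m → ℝ := fun j => ∑ i, α i * Real.exp (u j i + 0 * v i) with hS0def
  set S10 : Fin m → ℝ := fun j => ∑ i, α i * v i * Real.exp (u j i + 0 * v i) with hS10def
  set P : Fin m → ℝ := fun j => ε * Real.log (S0 j) with hPdef
  set D : Fin m → ℝ := fun j => ε * (S10 j / S0 j) with hDdef
  set T : Fin m → ℝ := fun j => ε * Real.log (∑ i, α i * Real.exp (u j i + 1 * v i)) with hTdef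
  set c : ℝ := ε * amin ^ 2 * Real.exp (-(4 * M)) * (v a - v b) ^ 2 / 2 with hcdef
  have hkey' : ∀ j, P j + D j + c ≤ T j := hkey
  have hc_eq : c = μ / 2 * (osc (f' - f)) ^ 2 := by
    rw [hcdef, hosc, hμdef, hvdef]
    field_simp
  -- transform identifications
  have hT' : ∀ j, transformF α C ε f' j = -T j := by
    intro j
    simp only [transformF, hTdef, neg_mul]
    congr 2
    congr 1
    apply Finset.sum_congr rfl
    intro i _
    congr 1
    simp only [hudef, hvdef, hhdef]
    field_simp
    congr 1; ring
  have hP' : ∀ j, transformF α C ε f j = -P j := by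
    intro j
    simp only [transformF, hPdef, hS0def, neg_mul]
    congr 2
    congr 1
    apply Finset.sum_congr rfl
    intro i _
    congr 1
    simp only [hudef]
    ring
  -- derivative
  have hfun : (fun t : ℝ => Qsemi α β C ε (fun i => f i + t * (f' i - f i)))
      = fun t => (∑ i, α i * (f i + t * h i))
          + ∑ j, β j * (-ε * Real.log (∑ i, α i * Real.exp (u j i + t * v i))) := by
    funext t
    simp only [Qsemi, transformF]
    congr 1
    apply Finset.sum_congr rfl
    intro j _
    congr 2
    congr 1
    apply Finset.sum_congr rfl
    intro i _
    congr 1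
    simp only [hudef, hvdef, hhdef]
    field_simp
    ring
  have hS0pos : ∀ j, 0 < S0 j := fun j =>
    Finset.sum_pos (fun i _ => mul_pos (hα i) (Real.exp_pos _)) Finset.univ_nonempty
  have hder : HasDerivAt (fun t : ℝ => (∑ i, α i * (f i + t * h i))
          + ∑ j, β j * (-ε * Real.log (∑ i, α i * Real.exp (u j i + t * v i))))
        ((∑ i, α i * h i) + ∑ j, β j * (-(D j))) 0 := by
    apply HasDerivAt.add
    · apply HasDerivAt.fun_sum
      intro i _
      have := ((hasDerivAt_const (0:ℝ) (f i)).add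
        ((hasDerivAt_id (0:ℝ)).mul_const (h i))).const_mul (α i)
      exact this.congr_deriv (by ring)
    · apply HasDerivAt.fun_sum
      intro j _
      have hS := hasDerivAt_S α (u j) v (0:ℝ)
      have := ((hS.log (hS0pos j).ne').const_mul (-ε)).const_mul (β j)
      exact this.congr_deriv (by simp only [hDdef, hS0def, hS10def]; ring)
  have hderiv : deriv (fun t : ℝ => Qsemi α β C ε (fun i => f i + t * (f' i - f i))) 0
      = (∑ i, α i * h i) + ∑ j, β j * (-(D j)) := by
    rw [hfun]
    exact hder.deriv
  -- assemble
  have hQf' : Qsemi α β C ε f' = (∑ i, α i * f' i) + ∑ j, β j * (-T j) := by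
    simp only [Qsemi]
    congr 1
    exact Finset.sum_congr rfl fun j _ => by rw [hT' j]
  have hQf : Qsemi α β C ε f = (∑ i, α i * f i) + ∑ j, β j * (-P j) := by
    simp only [Qsemi]
    congr 1
    exact Finset.sum_congr rfl fun j _ => by rw [hP' j]
  have hlin : ∑ i, α i * f' i = (∑ i, α i * f i) + ∑ i, α i * h i := by
    rw [← Finset.sum_add_distrib]
    exact Finset.sum_congr rfl fun i _ => by simp [hhdef]; ring
  have hsumT : ∑ j, β j * (-T j) ≤ (∑ j, β j * (-P j)) + (∑ j, β j * (-(D j))) - c := by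
    have step : ∑ j, β j * (-T j) ≤ ∑ j, β j * (-(P j + D j + c)) := by
      apply Finset.sum_le_sum
      intro j _
      exact mul_le_mul_of_nonneg_left (neg_le_neg (hkey' j)) (hβ j).le
    have expand : ∑ j, β j * (-(P j + D j + c))
        = (∑ j, β j * (-P j)) + (∑ j, β j * (-(D j))) - c := by
      have e : ∀ j, β j * (-(P j + D j + c)) = β j * (-P j) + β j * (-(D j)) - β j * c :=
        fun j => by ring
      rw [Finset.sum_congr rfl (fun j _ => e j), Finset.sum_sub_distrib,
        Finset.sum_add_distrib, ← Finset.sum_mul, hβs, one_mul]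
    linarith [step, le_of_eq expand]
  rw [hQf', hQf, hderiv, hlin]
  have := hc_eq
  linarith
end

section
/- Global convergence of Sinkhorn iterations interleaved with arbitrary value-nondecreasing steps (convergence part of the SK–NR theorem): let f* be an optimal potential (a maximizer of Q^semi_ε, satisfying the Sinkhorn equations with g* = (f*)^{C,ε}). Suppose (f_k)_{k≥0} is any sequence in ℝ^n such that for every k, Q^semi_ε(f_{k+1}) ≥ Q^semi_ε(((f_k)^{C,ε})^{C,ε}), i.e. each iterate is obtained from the previous one by a Sinkhorn sweep possibly followed by any step that does not decrease the semi-dual value. Then Q^semi_ε(f_k) → Q^semi_ε(f*) and ‖f_k − f*‖_osc → 0 as k → ∞ (convergence of the potentials modulo additive constants). -/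
open Real Filter

open Finset

section Aux
variable {n m : ℕ} (α : Fin n → ℝ) (β : Fin m → ℝ) (C : Fin n → Fin m → ℝ) (ε : ℝ)

/-- inner sum for transformF -/
noncomputable def sA (f : Fin n → ℝ) (j : Fin m) : ℝ := ∑ i, α i * Real.exp ((f i - C i j) / ε)
/-- inner sum for transformG -/
noncomputable def sB (g : Fin m → ℝ) (i : Fin n) : ℝ := ∑ j, β j * Real.exp ((g j - C i j) / ε)

lemma transformF_def (f : Fin n → ℝ) (j : Fin m) :
    transformF α C ε f j = -ε * Real.log (sA α C ε f j) := rfl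

lemma transformG_def (g : Fin m → ℝ) (i : Fin n) :
    transformG β C ε g i = -ε * Real.log (sB β C ε g i) := rfl

variable {α β ε}

lemma sA_pos (hn : 0 < n) (hα : ∀ i, 0 < α i) (f : Fin n → ℝ) (j : Fin m) :
    0 < sA α C ε f j := by
  have : Nonempty (Fin n) := ⟨⟨0, hn⟩⟩
  exact Finset.sum_pos (fun i _ => mul_pos (hα i) (Real.exp_pos _)) univ_nonempty

lemma sB_pos (hm : 0 < m) (hβ : ∀ j, 0 < β j) (g : Fin m → ℝ) (i : Fin n) :
    0 < sB β C ε g i := by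
  have : Nonempty (Fin m) := ⟨⟨0, hm⟩⟩
  exact Finset.sum_pos (fun j _ => mul_pos (hβ j) (Real.exp_pos _)) univ_nonempty

lemma exp_transformF (hn : 0 < n) (hα : ∀ i, 0 < α i) (hε : 0 < ε) (f : Fin n → ℝ) (j : Fin m) :
    Real.exp (transformF α C ε f j / ε) = (sA α C ε f j)⁻¹ := by
  rw [transformF_def]
  rw [neg_mul, neg_div, mul_div_cancel_left₀ _ hε.ne', Real.exp_neg,
    Real.exp_log (sA_pos C hn hα f j)]

lemma exp_transformG (hm : 0 < m) (hβ : ∀ j, 0 < β j) (hε : 0 < ε) (g : Fin m → ℝ) (i : Fin n) :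
    Real.exp (transformG β C ε g i / ε) = (sB β C ε g i)⁻¹ := by
  rw [transformG_def]
  rw [neg_mul, neg_div, mul_div_cancel_left₀ _ hε.ne', Real.exp_neg,
    Real.exp_log (sB_pos C hm hβ g i)]

lemma sB_exp (hm : 0 < m) (hβ : ∀ j, 0 < β j) (hε : 0 < ε) (g : Fin m → ℝ) (i : Fin n) :
    sB β C ε g i = Real.exp (-(transformG β C ε g i) / ε) := by
  rw [transformG_def, neg_mul, neg_neg, mul_div_cancel_left₀ _ hε.ne',
    Real.exp_log (sB_pos C hm hβ g i)]

lemma sA_exp (hn : 0 < n) (hα : ∀ i, 0 < α i) (hε : 0 < ε) (f : Fin n → ℝ) (j : Fin m) :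
    sA α C ε f j = Real.exp (-(transformF α C ε f j) / ε) := by
  rw [transformF_def, neg_mul, neg_neg, mul_div_cancel_left₀ _ hε.ne',
    Real.exp_log (sA_pos C hn hα f j)]

end Aux

noncomputable def Dual {n m : ℕ} (α : Fin n → ℝ) (β : Fin m → ℝ) (C : Fin n → Fin m → ℝ)
    (ε : ℝ) (f : Fin n → ℝ) (g : Fin m → ℝ) : ℝ :=
  (∑ i, α i * f i) + (∑ j, β j * g j)
    - ε * ((∑ j, β j * (Real.exp (g j / ε) * sA α C ε f j)) - 1)

section Aux2
variable {n m : ℕ} {α : Fin n → ℝ} {β : Fin m → ℝ} (C : Fin n → Fin m → ℝ) {ε : ℝ}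

lemma swap_sum (f : Fin n → ℝ) (g : Fin m → ℝ) :
    ∑ j, β j * (Real.exp (g j / ε) * sA α C ε f j)
      = ∑ i, α i * (Real.exp (f i / ε) * sB β C ε g i) := by
  simp only [sA, sB, Finset.mul_sum]
  rw [Finset.sum_comm]
  refine Finset.sum_congr rfl fun i _ => Finset.sum_congr rfl fun j _ => ?_
  have : Real.exp (g j / ε) * Real.exp ((f i - C i j) / ε)
      = Real.exp (f i / ε) * Real.exp ((g j - C i j) / ε) := by
    rw [← Real.exp_add, ← Real.exp_add]
    congr 1
    ring
  linear_combination (β j * α i) * this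

lemma dual_le_Q (hn : 0 < n) (hα : ∀ i, 0 < α i) (hβ : ∀ j, 0 < β j)
    (hβs : ∑ j, β j = 1) (hε : 0 < ε) (f : Fin n → ℝ) (g : Fin m → ℝ) :
    Dual α β C ε f g ≤ Qsemi α β C ε f := by
  have hterm : ∀ j, 0 ≤ β j * (transformF α C ε f j - g j
      + ε * (Real.exp (g j / ε) * sA α C ε f j) - ε) := by
    intro j
    apply mul_nonneg (hβ j).le
    have hxpos : 0 < Real.exp (g j / ε) * sA α C ε f j :=
      mul_pos (Real.exp_pos _) (sA_pos C hn hα f j)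
    have hlog := Real.log_le_sub_one_of_pos hxpos
    rw [Real.log_mul (Real.exp_ne_zero _) (sA_pos C hn hα f j).ne', Real.log_exp] at hlog
    have e1 : ε * (g j / ε + Real.log (sA α C ε f j))
        ≤ ε * (Real.exp (g j / ε) * sA α C ε f j - 1) :=
      mul_le_mul_of_nonneg_left hlog hε.le
    rw [mul_add, mul_comm ε (g j / ε), div_mul_cancel₀ _ hε.ne'] at e1
    rw [transformF_def]
    linarith
  have hsum : ∑ j, β j * (transformF α C ε f j - g j
      + ε * (Real.exp (g j / ε) * sA α C ε f j) - ε)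
      = Qsemi α β C ε f - Dual α β C ε f g := by
    unfold Qsemi Dual
    have expand : ∀ j ∈ Finset.univ, β j * (transformF α C ε f j - g j
        + ε * (Real.exp (g j / ε) * sA α C ε f j) - ε)
        = β j * transformF α C ε f j - β j * g j
          + ε * (β j * (Real.exp (g j / ε) * sA α C ε f j)) - β j * ε := fun j _ => by ring
    rw [Finset.sum_congr rfl expand]
    simp only [Finset.sum_sub_distrib, Finset.sum_add_distrib]
    rw [← Finset.mul_sum, ← Finset.sum_mul, hβs, one_mul]
    ring
  have h0 : 0 ≤ ∑ j, β j * (transformF α C ε f j - g j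
      + ε * (Real.exp (g j / ε) * sA α C ε f j) - ε) :=
    Finset.sum_nonneg fun j _ => hterm j
  linarith

lemma dual_transformF (hn : 0 < n) (hα : ∀ i, 0 < α i) (hβs : ∑ j, β j = 1) (hε : 0 < ε)
    (f : Fin n → ℝ) :
    Dual α β C ε f (transformF α C ε f) = Qsemi α β C ε f := by
  unfold Dual Qsemi
  have : ∀ j ∈ Finset.univ, β j * (Real.exp (transformF α C ε f j / ε) * sA α C ε f j)
      = β j := fun j _ => by
    rw [exp_transformF C hn hα hε, inv_mul_cancel₀ (sA_pos C hn hα f j).ne', mul_one]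
  rw [Finset.sum_congr rfl this, hβs]
  ring

lemma gap_ineq (hn : 0 < n) (hm : 0 < m) (hα : ∀ i, 0 < α i) (hβ : ∀ j, 0 < β j)
    (hαs : ∑ i, α i = 1) (hβs : ∑ j, β j = 1) (hε : 0 < ε) (f : Fin n → ℝ) :
    Qsemi α β C ε f + ε * ∑ i, α i *
        (Real.exp ((f i - transformG β C ε (transformF α C ε f) i) / ε) - 1
          - (f i - transformG β C ε (transformF α C ε f) i) / ε)
      ≤ Qsemi α β C ε (transformG β C ε (transformF α C ε f)) := by
  set g := transformF α C ε f with hg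
  set Sf := transformG β C ε g with hSf
  set u : Fin n → ℝ := fun i => (f i - Sf i) / ε with hu
  have h1 : Dual α β C ε Sf g ≤ Qsemi α β C ε Sf := dual_le_Q C hn hα hβ hβs hε Sf g
  have h2 : Dual α β C ε f g = Qsemi α β C ε f := dual_transformF C hn hα hβs hε f
  have hT1 : ∑ j, β j * (Real.exp (g j / ε) * sA α C ε Sf j) = 1 := by
    rw [swap_sum]
    have : ∀ i ∈ Finset.univ, α i * (Real.exp (Sf i / ε) * sB β C ε g i) = α i := fun i _ => by
      rw [hSf, exp_transformG C hm hβ hε, inv_mul_cancel₀ (sB_pos C hm hβ g i).ne', mul_one]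
    rw [Finset.sum_congr rfl this, hαs]
  have hT2 : ∑ j, β j * (Real.exp (g j / ε) * sA α C ε f j)
      = ∑ i, α i * Real.exp (u i) := by
    rw [swap_sum]
    refine Finset.sum_congr rfl fun i _ => ?_
    rw [sB_exp C hm hβ hε, ← Real.exp_add, ← hSf]
    congr 1
    have : u i = (f i - Sf i) / ε := rfl
    rw [this]
    ring
  have hdiff : Dual α β C ε Sf g - Dual α β C ε f g
      = ε * ∑ i, α i * (Real.exp (u i) - 1 - u i) := by
    unfold Dual
    rw [hT1, hT2, Finset.mul_sum]
    have hterm : ∀ i ∈ Finset.univ, ε * (α i * (Real.exp (u i) - 1 - u i))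
        = ε * (α i * Real.exp (u i)) - ε * α i - (α i * f i - α i * Sf i) := by
      intro i _
      have hui : u i = (f i - Sf i) / ε := rfl
      rw [hui]
      field_simp
    rw [Finset.sum_congr rfl hterm]
    simp only [Finset.sum_sub_distrib, ← Finset.mul_sum]
    rw [hαs]
    ring
  linarith
end Aux2

section Aux3
variable {n m : ℕ} {α : Fin n → ℝ} {β : Fin m → ℝ} (C : Fin n → Fin m → ℝ) {ε : ℝ}

lemma Q_mono (hn : 0 < n) (hm : 0 < m) (hα : ∀ i, 0 < α i) (hβ : ∀ j, 0 < β j)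
    (hαs : ∑ i, α i = 1) (hβs : ∑ j, β j = 1) (hε : 0 < ε) (f : Fin n → ℝ) :
    Qsemi α β C ε f ≤ Qsemi α β C ε (transformG β C ε (transformF α C ε f)) := by
  have hg := gap_ineq C hn hm hα hβ hαs hβs hε f
  have h0 : 0 ≤ ∑ i, α i *
      (Real.exp ((f i - transformG β C ε (transformF α C ε f) i) / ε) - 1
        - (f i - transformG β C ε (transformF α C ε f) i) / ε) := by
    refine Finset.sum_nonneg fun i _ => mul_nonneg (hα i).le ?_
    have := Real.add_one_le_exp ((f i - transformG β C ε (transformF α C ε f) i) / ε)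
    linarith
  nlinarith

lemma fixed_of_eq (hn : 0 < n) (hm : 0 < m) (hα : ∀ i, 0 < α i) (hβ : ∀ j, 0 < β j)
    (hαs : ∑ i, α i = 1) (hβs : ∑ j, β j = 1) (hε : 0 < ε) {f : Fin n → ℝ}
    (hle : Qsemi α β C ε (transformG β C ε (transformF α C ε f)) ≤ Qsemi α β C ε f) :
    transformG β C ε (transformF α C ε f) = f := by
  have hg := gap_ineq C hn hm hα hβ hαs hβs hε f
  set Sf := transformG β C ε (transformF α C ε f) with hSf
  have hnonneg : ∀ i, 0 ≤ α i * (Real.exp ((f i - Sf i) / ε) - 1 - (f i - Sf i) / ε) := by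
    intro i
    refine mul_nonneg (hα i).le ?_
    have := Real.add_one_le_exp ((f i - Sf i) / ε)
    linarith
  have hsum0 : ∑ i, α i * (Real.exp ((f i - Sf i) / ε) - 1 - (f i - Sf i) / ε) = 0 := by
    have hle' : ε * ∑ i, α i * (Real.exp ((f i - Sf i) / ε) - 1 - (f i - Sf i) / ε) ≤ 0 := by
      linarith
    have hge : 0 ≤ ∑ i, α i * (Real.exp ((f i - Sf i) / ε) - 1 - (f i - Sf i) / ε) :=
      Finset.sum_nonneg fun i _ => hnonneg i
    nlinarith
  have hzero := (Finset.sum_eq_zero_iff_of_nonneg (fun i _ => hnonneg i)).1 hsum0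
  funext i
  have hi := hzero i (Finset.mem_univ i)
  have hEi : Real.exp ((f i - Sf i) / ε) - 1 - (f i - Sf i) / ε = 0 := by
    rcases mul_eq_zero.1 hi with h | h
    · exact absurd h (hα i).ne'
    · exact h
  by_contra hne
  have hune : (f i - Sf i) / ε ≠ 0 := by
    intro h0
    apply hne
    have : f i - Sf i = 0 := by
      field_simp at h0
      linarith
    linarith
  have := Real.add_one_lt_exp hune
  linarith

lemma fixed_max (hn : 0 < n) (hm : 0 < m) (hα : ∀ i, 0 < α i) (hβ : ∀ j, 0 < β j)
    (hαs : ∑ i, α i = 1) (hβs : ∑ j, β j = 1) (hε : 0 < ε) {f : Fin n → ℝ}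
    (hf : transformG β C ε (transformF α C ε f) = f) (f' : Fin n → ℝ) :
    Qsemi α β C ε f' ≤ Qsemi α β C ε f := by
  set g := transformF α C ε f with hg
  set p : Fin n → Fin m → ℝ :=
    fun i j => α i * (Real.exp ((f i - C i j) / ε) * Real.exp (g j / ε)) with hp
  have hppos : ∀ i j, 0 < p i j :=
    fun i j => mul_pos (hα i) (mul_pos (Real.exp_pos _) (Real.exp_pos _))
  have hpsum : ∀ j, ∑ i, p i j = 1 := by
    intro j
    have h1 : ∑ i, p i j = sA α C ε f j * Real.exp (g j / ε) := by
      simp only [hp, sA, Finset.sum_mul]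
      exact Finset.sum_congr rfl fun i _ => by ring
    rw [h1, hg, exp_transformF C hn hα hε, mul_inv_cancel₀ (sA_pos C hn hα f j).ne']
  have hrow : ∀ i, ∑ j, β j * p i j = α i := by
    intro i
    have h1 : ∑ j, β j * p i j = α i * (Real.exp (f i / ε) * sB β C ε g i) := by
      simp only [hp, sB, Finset.mul_sum]
      refine Finset.sum_congr rfl fun j _ => ?_
      have hx : Real.exp ((f i - C i j) / ε) * Real.exp (g j / ε)
          = Real.exp (f i / ε) * Real.exp ((g j - C i j) / ε) := by
        rw [← Real.exp_add, ← Real.exp_add]; congr 1; ring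
      linear_combination (β j * α i) * hx
    rw [h1, sB_exp C hm hβ hε, ← Real.exp_add]
    rw [show transformG β C ε g i = f i from congrFun hf i]
    rw [show f i / ε + -(f i) / ε = 0 by ring, Real.exp_zero, mul_one]
  have jensen : ∀ j, transformF α C ε f' j ≤ g j - ∑ i, p i j * (f' i - f i) := by
    intro j
    have hconv := convexOn_exp.map_sum_le (t := Finset.univ) (w := fun i => p i j)
        (p := fun i => (f' i - f i) / ε) (fun i _ => (hppos i j).le) (hpsum j)
        (fun i _ => Set.mem_univ _)
    simp only [smul_eq_mul] at hconv
    have hRHS : ∑ i, p i j * Real.exp ((f' i - f i) / ε)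
        = Real.exp (g j / ε) * sA α C ε f' j := by
      simp only [hp, sA, Finset.mul_sum]
      refine Finset.sum_congr rfl fun i _ => ?_
      have hx : Real.exp ((f i - C i j) / ε) * Real.exp ((f' i - f i) / ε)
          = Real.exp ((f' i - C i j) / ε) := by
        rw [← Real.exp_add]; congr 1; ring
      linear_combination (α i * Real.exp (g j / ε)) * hx
    rw [hRHS] at hconv
    have hTle : ∑ i, p i j * ((f' i - f i) / ε) ≤ g j / ε + Real.log (sA α C ε f' j) := by
      calc ∑ i, p i j * ((f' i - f i) / ε)
          = Real.log (Real.exp (∑ i, p i j * ((f' i - f i) / ε))) := (Real.log_exp _).symm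
        _ ≤ Real.log (Real.exp (g j / ε) * sA α C ε f' j) :=
            Real.log_le_log (Real.exp_pos _) hconv
        _ = g j / ε + Real.log (sA α C ε f' j) := by
            rw [Real.log_mul (Real.exp_ne_zero _) (sA_pos C hn hα f' j).ne', Real.log_exp]
    rw [transformF_def]
    have h3 : ε * ∑ i, p i j * ((f' i - f i) / ε) = ∑ i, p i j * (f' i - f i) := by
      rw [Finset.mul_sum]
      refine Finset.sum_congr rfl fun i _ => ?_
      field_simp
    have h2 := mul_le_mul_of_nonneg_left hTle hε.le
    rw [mul_add, mul_comm ε (g j / ε), div_mul_cancel₀ _ hε.ne'] at h2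
    linarith
  have hQ' : Qsemi α β C ε f' ≤ (∑ i, α i * f' i)
      + ∑ j, β j * (g j - ∑ i, p i j * (f' i - f i)) := by
    unfold Qsemi
    refine add_le_add_right (Finset.sum_le_sum fun j _ => ?_) _
    exact mul_le_mul_of_nonneg_left (jensen j) (hβ j).le
  have hswap : ∑ j, β j * ∑ i, p i j * (f' i - f i) = ∑ i, α i * (f' i - f i) := by
    simp only [Finset.mul_sum]
    rw [Finset.sum_comm]
    refine Finset.sum_congr rfl fun i _ => ?_
    have h1 : ∑ j, β j * (p i j * (f' i - f i)) = (∑ j, β j * p i j) * (f' i - f i) := by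
      rw [Finset.sum_mul]
      exact Finset.sum_congr rfl fun j _ => by ring
    rw [h1, hrow]
  have expand : ∑ j, β j * (g j - ∑ i, p i j * (f' i - f i))
      = ∑ j, β j * g j - ∑ i, α i * (f' i - f i) := by
    have h1 : ∀ j ∈ Finset.univ, β j * (g j - ∑ i, p i j * (f' i - f i))
        = β j * g j - β j * ∑ i, p i j * (f' i - f i) := fun j _ => by ring
    rw [Finset.sum_congr rfl h1, Finset.sum_sub_distrib, hswap]
  have hsub : ∑ i, α i * (f' i - f i) = ∑ i, α i * f' i - ∑ i, α i * f i := by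
    simp [mul_sub, Finset.sum_sub_distrib]
  have hQf : Qsemi α β C ε f = (∑ i, α i * f i) + ∑ j, β j * g j := by
    unfold Qsemi
    rw [← hg]
  linarith
end Aux3

section Aux4
variable {n m : ℕ} {α : Fin n → ℝ} {β : Fin m → ℝ} (C : Fin n → Fin m → ℝ) {ε : ℝ}

lemma fixed_unique (hn : 0 < n) (hm : 0 < m) (hα : ∀ i, 0 < α i) (hβ : ∀ j, 0 < β j)
    (hε : 0 < ε) {f h : Fin n → ℝ}
    (hf : transformG β C ε (transformF α C ε f) = f)
    (hh : transformG β C ε (transformF α C ε h) = h) :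
    ∃ c, ∀ i, f i = h i + c := by
  obtain ⟨is, _, hmaxi⟩ := Finset.exists_max_image Finset.univ (fun i => f i - h i)
    ⟨⟨0, hn⟩, Finset.mem_univ _⟩
  set c := f is - h is with hc
  by_cases hall : ∀ i, f i - h i = c
  · exact ⟨c, fun i => by linarith [hall i]⟩
  exfalso
  push_neg at hall
  obtain ⟨i1, hi1⟩ := hall
  have hi1lt : f i1 - h i1 < c := lt_of_le_of_ne (hmaxi i1 (Finset.mem_univ _)) hi1
  have h1 : ∀ j, sA α C ε f j < Real.exp (c / ε) * sA α C ε h j := by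
    intro j
    rw [sA, sA, Finset.mul_sum]
    refine Finset.sum_lt_sum (fun i _ => ?_) ⟨i1, Finset.mem_univ _, ?_⟩
    · have e1 : Real.exp (c / ε) * (α i * Real.exp ((h i - C i j) / ε))
          = α i * Real.exp ((c + (h i - C i j)) / ε) := by
        rw [add_div, Real.exp_add]; ring
      rw [e1]
      exact mul_le_mul_of_nonneg_left
        (Real.exp_le_exp.2 ((div_le_div_iff_of_pos_right hε).2 (by linarith [hmaxi i (Finset.mem_univ i)])))
        (hα i).le
    · have e1 : Real.exp (c / ε) * (α i1 * Real.exp ((h i1 - C i1 j) / ε))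
          = α i1 * Real.exp ((c + (h i1 - C i1 j)) / ε) := by
        rw [add_div, Real.exp_add]; ring
      rw [e1]
      exact mul_lt_mul_of_pos_left
        (Real.exp_lt_exp.2 ((div_lt_div_iff_of_pos_right hε).2 (by linarith))) (hα i1)
  have h2 : ∀ j, transformF α C ε h j - c < transformF α C ε f j := by
    intro j
    have hl := Real.log_lt_log (sA_pos C hn hα f j) (h1 j)
    rw [Real.log_mul (Real.exp_ne_zero _) (sA_pos C hn hα h j).ne', Real.log_exp] at hl
    have h3 := mul_lt_mul_of_pos_left hl hε
    rw [mul_add, mul_comm ε (c / ε), div_mul_cancel₀ _ hε.ne'] at h3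
    rw [transformF_def, transformF_def]
    linarith
  have h3 : Real.exp (-c / ε) * sB β C ε (transformF α C ε h) is
      < sB β C ε (transformF α C ε f) is := by
    have : Nonempty (Fin m) := ⟨⟨0, hm⟩⟩
    rw [sB, sB, Finset.mul_sum]
    refine Finset.sum_lt_sum_of_nonempty Finset.univ_nonempty (fun j _ => ?_)
    have e1 : Real.exp (-c / ε) * (β j * Real.exp ((transformF α C ε h j - C is j) / ε))
        = β j * Real.exp ((-c + (transformF α C ε h j - C is j)) / ε) := by
      rw [add_div, Real.exp_add]; ring
    rw [e1]
    exact mul_lt_mul_of_pos_left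
      (Real.exp_lt_exp.2 ((div_lt_div_iff_of_pos_right hε).2 (by linarith [h2 j]))) (hβ j)
  have hl := Real.log_lt_log
    (mul_pos (Real.exp_pos _) (sB_pos C hm hβ (transformF α C ε h) is)) h3
  rw [Real.log_mul (Real.exp_ne_zero _) (sB_pos C hm hβ (transformF α C ε h) is).ne',
    Real.log_exp] at hl
  have h4 := mul_lt_mul_of_pos_left hl hε
  rw [mul_add, mul_comm ε (-c / ε), div_mul_cancel₀ _ hε.ne'] at h4
  have e2 : f is = -ε * Real.log (sB β C ε (transformF α C ε f) is) := by
    rw [← congrFun hf is]; rfl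
  have e3 : h is = -ε * Real.log (sB β C ε (transformF α C ε h) is) := by
    rw [← congrFun hh is]; rfl
  have : f is - h is < c := by
    rw [e2, e3]; linarith
  linarith

lemma osc_eq (hn : 0 < n) (h : Fin n → ℝ) :
    osc h = Finset.univ.sup' (⟨⟨0, hn⟩, Finset.mem_univ _⟩ : (Finset.univ : Finset (Fin n)).Nonempty) h
      - Finset.univ.inf' ⟨⟨0, hn⟩, Finset.mem_univ _⟩ h := by
  have : Nonempty (Fin n) := ⟨⟨0, hn⟩⟩
  unfold osc
  rw [Finset.sup'_univ_eq_ciSup, Finset.inf'_univ_eq_ciInf]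

lemma inf'_add_const {ι : Type*} {s : Finset ι} (H : s.Nonempty) (v : ι → ℝ) (c : ℝ) :
    (s.inf' H fun i => v i + c) = s.inf' H v + c := by
  apply le_antisymm
  · obtain ⟨i, hi, hieq⟩ := Finset.exists_mem_eq_inf' H v
    calc (s.inf' H fun i => v i + c) ≤ v i + c := Finset.inf'_le _ hi
      _ = s.inf' H v + c := by rw [hieq]
  · exact Finset.le_inf' _ _ fun i hi => add_le_add_left (Finset.inf'_le _ hi) c

lemma osc_nonneg (hn : 0 < n) (h : Fin n → ℝ) : 0 ≤ osc h := by
  rw [osc_eq hn]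
  have h1 : h ⟨0, hn⟩ ≤ Finset.univ.sup' ⟨⟨0, hn⟩, Finset.mem_univ _⟩ h :=
    Finset.le_sup' _ (Finset.mem_univ _)
  have h2 : Finset.univ.inf' ⟨⟨0, hn⟩, Finset.mem_univ _⟩ h ≤ h ⟨0, hn⟩ :=
    Finset.inf'_le _ (Finset.mem_univ _)
  linarith

lemma osc_add_const (hn : 0 < n) (v : Fin n → ℝ) (c : ℝ) :
    osc (fun i => v i + c) = osc v := by
  have hne : (Finset.univ : Finset (Fin n)).Nonempty := ⟨⟨0, hn⟩, Finset.mem_univ _⟩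
  rw [osc_eq hn, osc_eq hn]
  show (univ.sup' hne fun i => v i + c) - univ.inf' hne (fun i => v i + c)
    = univ.sup' hne v - univ.inf' hne v
  rw [inf'_add_const, ← Finset.sup'_add]
  ring

lemma osc_const (hn : 0 < n) (c : ℝ) : osc (fun _ : Fin n => c) = 0 := by
  have hne : (Finset.univ : Finset (Fin n)).Nonempty := ⟨⟨0, hn⟩, Finset.mem_univ _⟩
  rw [osc_eq hn]
  show (univ.sup' hne fun _ => c) - univ.inf' hne (fun _ => c) = 0
  simp

lemma osc_le_of_bounds (hn : 0 < n) {v : Fin n → ℝ} {a b : ℝ}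
    (hl : ∀ i, a ≤ v i) (hu : ∀ i, v i ≤ b) : osc v ≤ b - a := by
  rw [osc_eq hn]
  have h1 : Finset.univ.sup' ⟨⟨0, hn⟩, Finset.mem_univ _⟩ v ≤ b :=
    Finset.sup'_le _ _ fun i _ => hu i
  have h2 : a ≤ Finset.univ.inf' ⟨⟨0, hn⟩, Finset.mem_univ _⟩ v :=
    Finset.le_inf' _ _ fun i _ => hl i
  linarith

lemma abs_le_osc_of_zero (hn : 0 < n) {v : Fin n → ℝ} (i0 : Fin n) (h0 : v i0 = 0)
    (i : Fin n) : |v i| ≤ osc v := by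
  rw [osc_eq hn]
  have h1 : v i ≤ Finset.univ.sup' ⟨⟨0, hn⟩, Finset.mem_univ _⟩ v :=
    Finset.le_sup' _ (Finset.mem_univ i)
  have h2 : Finset.univ.inf' ⟨⟨0, hn⟩, Finset.mem_univ _⟩ v ≤ v i :=
    Finset.inf'_le _ (Finset.mem_univ i)
  have h3 : v i0 ≤ Finset.univ.sup' ⟨⟨0, hn⟩, Finset.mem_univ _⟩ v :=
    Finset.le_sup' _ (Finset.mem_univ i0)
  have h4 : Finset.univ.inf' ⟨⟨0, hn⟩, Finset.mem_univ _⟩ v ≤ v i0 :=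
    Finset.inf'_le _ (Finset.mem_univ i0)
  rw [h0] at h3 h4
  rw [abs_le]
  constructor <;> linarith

end Aux4

section Aux5
variable {n m : ℕ} {α : Fin n → ℝ} {β : Fin m → ℝ} (C : Fin n → Fin m → ℝ) {ε : ℝ}

lemma transformF_add_const (hn : 0 < n) (hα : ∀ i, 0 < α i) (hε : 0 < ε)
    (f : Fin n → ℝ) (c : ℝ) :
    transformF α C ε (fun i => f i + c) = fun j => transformF α C ε f j - c := by
  funext j
  have hsA : sA α C ε (fun i => f i + c) j = Real.exp (c / ε) * sA α C ε f j := by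
    rw [sA, sA, Finset.mul_sum]
    refine Finset.sum_congr rfl fun i _ => ?_
    rw [show (f i + c - C i j) / ε = c / ε + (f i - C i j) / ε by ring, Real.exp_add]
    ring
  show -ε * Real.log (sA α C ε (fun i => f i + c) j) = -ε * Real.log (sA α C ε f j) - c
  rw [hsA, Real.log_mul (Real.exp_ne_zero _) (sA_pos C hn hα f j).ne', Real.log_exp]
  field_simp
  ring

lemma transformG_sub_const (hm : 0 < m) (hβ : ∀ j, 0 < β j) (hε : 0 < ε)
    (g : Fin m → ℝ) (c : ℝ) :
    transformG β C ε (fun j => g j - c) = fun i => transformG β C ε g i + c := by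
  funext i
  have hsB : sB β C ε (fun j => g j - c) i = Real.exp (-c / ε) * sB β C ε g i := by
    rw [sB, sB, Finset.mul_sum]
    refine Finset.sum_congr rfl fun j _ => ?_
    rw [show (g j - c - C i j) / ε = -c / ε + (g j - C i j) / ε by ring, Real.exp_add]
    ring
  show -ε * Real.log (sB β C ε (fun j => g j - c) i) = -ε * Real.log (sB β C ε g i) + c
  rw [hsB, Real.log_mul (Real.exp_ne_zero _) (sB_pos C hm hβ g i).ne', Real.log_exp]
  field_simp
  ring

lemma S_add_const (hn : 0 < n) (hm : 0 < m) (hα : ∀ i, 0 < α i) (hβ : ∀ j, 0 < β j)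
    (hε : 0 < ε) (f : Fin n → ℝ) (c : ℝ) :
    transformG β C ε (transformF α C ε (fun i => f i + c))
      = fun i => transformG β C ε (transformF α C ε f) i + c := by
  rw [transformF_add_const C hn hα hε, transformG_sub_const C hm hβ hε]

lemma Q_add_const (hn : 0 < n) (hα : ∀ i, 0 < α i) (hαs : ∑ i, α i = 1)
    (hβs : ∑ j, β j = 1) (hε : 0 < ε) (f : Fin n → ℝ) (c : ℝ) :
    Qsemi α β C ε (fun i => f i + c) = Qsemi α β C ε f := by
  unfold Qsemi
  rw [transformF_add_const C hn hα hε]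
  have h1 : ∑ i, α i * (f i + c) = (∑ i, α i * f i) + c := by
    simp only [mul_add, Finset.sum_add_distrib]
    rw [← Finset.sum_mul, hαs, one_mul]
  have h2 : ∑ j, β j * (transformF α C ε f j - c)
      = (∑ j, β j * transformF α C ε f j) - c := by
    simp only [mul_sub, Finset.sum_sub_distrib]
    rw [← Finset.sum_mul, hβs, one_mul]
  rw [h1, h2]
  ring

lemma cont_sA (hn : 0 < n) (hα : ∀ i, 0 < α i) (j : Fin m) :
    Continuous fun f : Fin n → ℝ => sA α C ε f j := by
  unfold sA
  exact continuous_finset_sum _ fun i _ => continuous_const.mul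
    (Real.continuous_exp.comp (by fun_prop))

lemma cont_transformF (hn : 0 < n) (hα : ∀ i, 0 < α i) (j : Fin m) :
    Continuous fun f : Fin n → ℝ => transformF α C ε f j := by
  simp only [transformF_def]
  exact continuous_const.mul (Continuous.log (cont_sA C hn hα j)
    fun f => (sA_pos C hn hα f j).ne')

lemma cont_Q (hn : 0 < n) (hα : ∀ i, 0 < α i) :
    Continuous (Qsemi α β C ε) := by
  unfold Qsemi
  exact (continuous_finset_sum _ fun i _ => continuous_const.mul (continuous_apply i)).add
    (continuous_finset_sum _ fun j _ => continuous_const.mul (cont_transformF C hn hα j))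

lemma cont_S (hn : 0 < n) (hm : 0 < m) (hα : ∀ i, 0 < α i) (hβ : ∀ j, 0 < β j) (hε : 0 < ε) :
    Continuous fun f : Fin n → ℝ => transformG β C ε (transformF α C ε f) := by
  refine continuous_pi fun i => ?_
  simp only [transformG_def]
  refine continuous_const.mul (Continuous.log ?_ ?_)
  · exact continuous_finset_sum _ fun j _ => continuous_const.mul
      (Real.continuous_exp.comp (((cont_transformF C hn hα j).sub continuous_const).div_const ε))
  · intro f
    exact (sB_pos C hm hβ (transformF α C ε f) i).ne'

lemma coercive (hn : 0 < n) (hm : 0 < m) (hα : ∀ i, 0 < α i) (hβ : ∀ j, 0 < β j)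
    (hαs : ∑ i, α i = 1) (hβs : ∑ j, β j = 1) (hε : 0 < ε) :
    ∃ a : ℝ, 0 < a ∧ ∃ K : ℝ, ∀ f : Fin n → ℝ, a * osc f ≤ K - Qsemi α β C ε f := by
  have hne : (Finset.univ : Finset (Fin n)).Nonempty := ⟨⟨0, hn⟩, Finset.mem_univ _⟩
  have hnem : (Finset.univ : Finset (Fin m)).Nonempty := ⟨⟨0, hm⟩, Finset.mem_univ _⟩
  set a := Finset.univ.inf' hne α with ha
  have hapos : 0 < a := by
    obtain ⟨i, _, hieq⟩ := Finset.exists_mem_eq_inf' hne α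
    rw [ha, hieq]
    exact hα i
  set Cmax := Finset.univ.sup' hne (fun i => Finset.univ.sup' hnem (C i)) with hCmax
  refine ⟨a, hapos, Cmax - ε * Real.log a, fun f => ?_⟩
  -- notation
  set Mx := Finset.univ.sup' hne f with hMx
  obtain ⟨imax, _, himax⟩ := Finset.exists_mem_eq_sup' hne f
  obtain ⟨imin, _, himin⟩ := Finset.exists_mem_eq_inf' hne f
  -- bound on transformF
  have hFb : ∀ j, transformF α C ε f j ≤ Cmax - ε * Real.log a - Mx := by
    intro j
    have h1 : α imax * Real.exp ((f imax - C imax j) / ε) ≤ sA α C ε f j :=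
      Finset.single_le_sum (f := fun i => α i * Real.exp ((f i - C i j) / ε))
        (fun i _ => mul_nonneg (hα i).le (Real.exp_pos _).le) (Finset.mem_univ imax)
    have h2 : Real.log (α imax * Real.exp ((f imax - C imax j) / ε)) ≤ Real.log (sA α C ε f j) :=
      Real.log_le_log (mul_pos (hα imax) (Real.exp_pos _)) h1
    rw [Real.log_mul (hα imax).ne' (Real.exp_ne_zero _), Real.log_exp] at h2
    have h3 : Real.log a ≤ Real.log (α imax) :=
      Real.log_le_log hapos (Finset.inf'_le _ (Finset.mem_univ imax))
    have h4 : C imax j ≤ Cmax := by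
      calc C imax j ≤ Finset.univ.sup' hnem (C imax) := Finset.le_sup' _ (Finset.mem_univ j)
        _ ≤ Cmax := Finset.le_sup' (f := fun i => Finset.univ.sup' hnem (C i))
            (Finset.mem_univ imax)
    have h5 : Mx = f imax := himax
    rw [transformF_def]
    have h6 := mul_le_mul_of_nonneg_left h2 hε.le
    rw [mul_add, mul_comm ε ((f imax - C imax j) / ε), div_mul_cancel₀ _ hε.ne'] at h6
    nlinarith [mul_le_mul_of_nonneg_left h3 hε.le]
  -- bound Qsemi
  have hQb : Qsemi α β C ε f ≤ (∑ i, α i * f i) + (Cmax - ε * Real.log a - Mx) := by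
    unfold Qsemi
    have : ∑ j, β j * transformF α C ε f j
        ≤ ∑ j, β j * (Cmax - ε * Real.log a - Mx) := by
      exact Finset.sum_le_sum fun j _ => mul_le_mul_of_nonneg_left (hFb j) (hβ j).le
    rw [← Finset.sum_mul, hβs, one_mul] at this
    linarith
  -- ∑ α f − Mx ≤ −a osc f
  have hsum : ∑ i, α i * f i - Mx = ∑ i, α i * (f i - Mx) := by
    have h1 : ∀ i ∈ Finset.univ, α i * (f i - Mx) = α i * f i - α i * Mx :=
      fun i _ => by ring
    rw [Finset.sum_congr rfl h1, Finset.sum_sub_distrib, ← Finset.sum_mul, hαs, one_mul]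
  have hterm : ∀ i ∈ Finset.univ, α i * (f i - Mx)
      ≤ if i = imin then α imin * (f imin - Mx) else 0 := by
    intro i _
    by_cases hi : i = imin
    · subst hi; simp
    · simp only [hi, if_false]
      have : f i ≤ Mx := Finset.le_sup' _ (Finset.mem_univ i)
      exact mul_nonpos_of_nonneg_of_nonpos (hα i).le (by linarith)
  have hsum2 : ∑ i, α i * (f i - Mx) ≤ α imin * (f imin - Mx) := by
    calc ∑ i, α i * (f i - Mx) ≤ ∑ i, if i = imin then α imin * (f imin - Mx) else 0 :=
          Finset.sum_le_sum hterm
      _ = α imin * (f imin - Mx) := by rw [Finset.sum_ite_eq' Finset.univ imin]; simp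
  have hoscle : a * osc f ≤ -(α imin * (f imin - Mx)) := by
    rw [osc_eq hn]
    have hminMx : f imin - Mx ≤ 0 := by
      have : f imin ≤ Mx := Finset.le_sup' _ (Finset.mem_univ imin)
      linarith
    have haimin : a ≤ α imin := Finset.inf'_le _ (Finset.mem_univ imin)
    have : -(α imin * (f imin - Mx)) = α imin * (Mx - f imin) := by ring
    rw [this]
    have hosceq : Finset.univ.sup' ⟨⟨0, hn⟩, Finset.mem_univ _⟩ f
        - Finset.univ.inf' ⟨⟨0, hn⟩, Finset.mem_univ _⟩ f = Mx - f imin := by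
      rw [← himin, hMx]
    rw [hosceq]
    exact mul_le_mul_of_nonneg_right haimin (by linarith)
  linarith
end Aux5

section Main
variable {n m : ℕ} {α : Fin n → ℝ} {β : Fin m → ℝ} (C : Fin n → Fin m → ℝ) {ε : ℝ}

lemma isCompact_good (hn : 0 < n) (hm : 0 < m) (hα : ∀ i, 0 < α i) (hβ : ∀ j, 0 < β j)
    (hαs : ∑ i, α i = 1) (hβs : ∑ j, β j = 1) (hε : 0 < ε) (c1 : ℝ)
    {T : Set (Fin n → ℝ)} (hT : IsClosed T) :
    IsCompact {h : Fin n → ℝ | h ⟨0, hn⟩ = 0 ∧ c1 ≤ Qsemi α β C ε h ∧ h ∈ T} := by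
  obtain ⟨a, hapos, K, hK⟩ := coercive C hn hm hα hβ hαs hβs hε
  have hset : {h : Fin n → ℝ | h ⟨0, hn⟩ = 0 ∧ c1 ≤ Qsemi α β C ε h ∧ h ∈ T}
      = {h : Fin n → ℝ | h ⟨0, hn⟩ = 0}
        ∩ ({h : Fin n → ℝ | c1 ≤ Qsemi α β C ε h} ∩ T) := rfl
  rw [hset]
  apply Metric.isCompact_of_isClosed_isBounded
  · exact (isClosed_eq (continuous_apply _) continuous_const).inter
      ((isClosed_le continuous_const (cont_Q C hn hα)).inter hT)
  · apply (Metric.isBounded_closedBall (x := (0 : Fin n → ℝ)) (r := (K - c1) / a)).subset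
    rintro h ⟨h0, hQ, -⟩
    rw [Metric.mem_closedBall, dist_zero_right]
    have h1 : a * osc h ≤ K - c1 := le_trans (hK h) (by simp only [Set.mem_setOf_eq] at hQ; linarith)
    have hoscn := osc_nonneg hn h
    have h2 : osc h ≤ (K - c1) / a := by
      rw [le_div_iff₀ hapos]
      nlinarith
    have hRnn : 0 ≤ (K - c1) / a := le_trans hoscn h2
    rw [pi_norm_le_iff_of_nonneg hRnn]
    intro i
    rw [Real.norm_eq_abs]
    exact le_trans (abs_le_osc_of_zero hn ⟨0, hn⟩ h0 i) h2

end Main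


/-- Global convergence of Sinkhorn iterations interleaved with arbitrary
value-nondecreasing steps: if `f*` maximizes `Q^semi_ε` (satisfying the
Sinkhorn equations) and each iterate satisfies
`Q^semi_ε(f_{k+1}) ≥ Q^semi_ε(((f_k)^{C,ε})^{C,ε})`, then
`Q^semi_ε(f_k) → Q^semi_ε(f*)` and `‖f_k − f*‖_osc → 0`. -/
theorem sknr_global_convergence
    {n m : ℕ} (hn : 0 < n) (hm : 0 < m)
    (α : Fin n → ℝ) (β : Fin m → ℝ)
    (hα : ∀ i, 0 < α i) (hβ : ∀ j, 0 < β j)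
    (hαs : ∑ i, α i = 1) (hβs : ∑ j, β j = 1)
    (C : Fin n → Fin m → ℝ) (ε : ℝ) (hε : 0 < ε)
    (fs : Fin n → ℝ)
    (hmax : ∀ f : Fin n → ℝ, Qsemi α β C ε f ≤ Qsemi α β C ε fs)
    (hfix : transformG β C ε (transformF α C ε fs) = fs)
    (f : ℕ → Fin n → ℝ)
    (hstep : ∀ k, Qsemi α β C ε (f (k + 1))
        ≥ Qsemi α β C ε (transformG β C ε (transformF α C ε (f k)))) :
    Tendsto (fun k => Qsemi α β C ε (f k)) atTop (nhds (Qsemi α β C ε fs)) ∧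
    Tendsto (fun k => osc (f k - fs)) atTop (nhds 0) := by
  have hmono : ∀ k, Qsemi α β C ε (f k) ≤ Qsemi α β C ε (f (k + 1)) :=
    fun k => le_trans (Q_mono C hn hm hα hβ hαs hβs hε (f k)) (hstep k)
  have hbdd : ∀ k, Qsemi α β C ε (f k) ≤ Qsemi α β C ε fs := fun k => hmax (f k)
  set a : ℕ → ℝ := fun k => Qsemi α β C ε (f k) with haseq
  have hamono : Monotone a := monotone_nat_of_le_succ hmono
  have habove : BddAbove (Set.range a) := ⟨Qsemi α β C ε fs, by rintro x ⟨k, rfl⟩; exact hbdd k⟩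
  set L := ⨆ k, a k with hLdef
  have htendL : Tendsto a atTop (nhds L) := tendsto_atTop_ciSup hamono habove
  have haleL : ∀ k, a k ≤ L := fun k => le_ciSup habove k
  have hLleM : L ≤ Qsemi α β C ε fs := ciSup_le hbdd
  -- membership helper
  have hQNk : ∀ k, Qsemi α β C ε (fun i => f k i + -(f k ⟨0, hn⟩)) = a k :=
    fun k => Q_add_const C hn hα hαs hβs hε (f k) _
  -- L = M
  have hLM : L = Qsemi α β C ε fs := by
    by_contra hne
    have hLlt : L < Qsemi α β C ε fs := lt_of_le_of_ne hLleM hne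
    have hKcomp : IsCompact {h : Fin n → ℝ | h ⟨0, hn⟩ = 0 ∧ a 0 ≤ Qsemi α β C ε h
        ∧ h ∈ {h : Fin n → ℝ | Qsemi α β C ε h ≤ L}} :=
      isCompact_good C hn hm hα hβ hαs hβs hε (a 0)
        (isClosed_le (cont_Q C hn hα) continuous_const)
    have hNmem : ∀ k, (fun i => f k i + -(f k ⟨0, hn⟩)) ∈
        {h : Fin n → ℝ | h ⟨0, hn⟩ = 0 ∧ a 0 ≤ Qsemi α β C ε h
          ∧ h ∈ {h : Fin n → ℝ | Qsemi α β C ε h ≤ L}} := by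
      intro k
      refine ⟨by simp, ?_, ?_⟩
      · rw [hQNk k]; exact hamono (Nat.zero_le k)
      · show Qsemi α β C ε _ ≤ L
        rw [hQNk k]; exact haleL k
    obtain ⟨h0, h0K, h0min⟩ := hKcomp.exists_isMinOn ⟨_, hNmem 0⟩
      (Continuous.continuousOn (f := fun h : Fin n → ℝ =>
          Qsemi α β C ε (transformG β C ε (transformF α C ε h)) - Qsemi α β C ε h)
        (((cont_Q (α := α) (β := β) (ε := ε) C hn hα).comp
          (cont_S C hn hm hα hβ hε)).sub (cont_Q C hn hα)))
    set δ := Qsemi α β C ε (transformG β C ε (transformF α C ε h0)) - Qsemi α β C ε h0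
      with hδdef
    have hδpos : 0 < δ := by
      rcases lt_or_ge 0 δ with h | h
      · exact h
      · exfalso
        have hfix0 : transformG β C ε (transformF α C ε h0) = h0 :=
          fixed_of_eq C hn hm hα hβ hαs hβs hε (by rw [hδdef] at h; linarith)
        have hge := fixed_max C hn hm hα hβ hαs hβs hε hfix0 fs
        obtain ⟨-, -, hQ0L⟩ := h0K
        simp only [Set.mem_setOf_eq] at hQ0L
        linarith
    have hstep' : ∀ k, a k + δ ≤ a (k + 1) := by
      intro k
      have hgap := h0min (hNmem k)
      simp only [Set.mem_setOf_eq] at hgap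
      have hSN : Qsemi α β C ε (transformG β C ε (transformF α C ε
            (fun i => f k i + -(f k ⟨0, hn⟩))))
          = Qsemi α β C ε (transformG β C ε (transformF α C ε (f k))) := by
        rw [S_add_const C hn hm hα hβ hε, Q_add_const C hn hα hαs hβs hε]
      rw [hSN, hQNk k] at hgap
      have hδle : δ ≤ Qsemi α β C ε (transformG β C ε (transformF α C ε (f k))) - a k := hgap
      calc a k + δ ≤ Qsemi α β C ε (transformG β C ε (transformF α C ε (f k))) := by linarith
        _ ≤ a (k + 1) := hstep k
    have grow : ∀ k : ℕ, a 0 + k * δ ≤ a k := by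
      intro k
      induction k with
      | zero => simp
      | succ k ih =>
        have := hstep' k
        push_cast
        push_cast at ih
        linarith
    obtain ⟨k, hk⟩ := exists_nat_gt ((Qsemi α β C ε fs - a 0) / δ)
    rw [div_lt_iff₀ hδpos] at hk
    have h1 := grow k
    have h2 := hbdd k
    have hak : a k = Qsemi α β C ε (f k) := rfl
    linarith
  have hT1 : Tendsto a atTop (nhds (Qsemi α β C ε fs)) := hLM ▸ htendL
  refine ⟨hT1, ?_⟩
  -- second part
  have hosccont : Continuous fun h : Fin n → ℝ => osc (fun i => h i - fs i) := by
    have hnuniv : ((Finset.univ : Finset (Fin n))).Nonempty := ⟨⟨0, hn⟩, Finset.mem_univ _⟩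
    have hrw : (fun h : Fin n → ℝ => osc (fun i => h i - fs i))
        = fun h : Fin n → ℝ => Finset.univ.sup' hnuniv (fun i => h i - fs i)
            - Finset.univ.inf' hnuniv (fun i => h i - fs i) :=
      funext fun h => osc_eq hn _
    rw [hrw]
    exact (Continuous.finset_sup'_apply hnuniv
        (fun i _ => (continuous_apply i).sub continuous_const)).sub
      (Continuous.finset_inf'_apply hnuniv
        (fun i _ => (continuous_apply i).sub continuous_const))
  rw [Metric.tendsto_atTop]
  intro η hη
  have hmemK' : ∀ k, η ≤ osc (f k - fs) → (fun i => f k i + -(f k ⟨0, hn⟩)) ∈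
      {h : Fin n → ℝ | h ⟨0, hn⟩ = 0 ∧ a 0 ≤ Qsemi α β C ε h
        ∧ h ∈ {h : Fin n → ℝ | η ≤ osc (fun i => h i - fs i)}} := by
    intro k hk
    refine ⟨by simp, ?_, ?_⟩
    · rw [hQNk k]; exact hamono (Nat.zero_le k)
    · show η ≤ osc (fun i => (f k i + -(f k ⟨0, hn⟩)) - fs i)
      have hrw : (fun i => (f k i + -(f k ⟨0, hn⟩)) - fs i)
          = fun i => (f k i - fs i) + -(f k ⟨0, hn⟩) := funext fun i => by ring
      rw [hrw, osc_add_const hn]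
      exact hk
  by_cases hK'ne : Set.Nonempty {h : Fin n → ℝ | h ⟨0, hn⟩ = 0 ∧ a 0 ≤ Qsemi α β C ε h
      ∧ h ∈ {h : Fin n → ℝ | η ≤ osc (fun i => h i - fs i)}}
  · have hK'comp : IsCompact {h : Fin n → ℝ | h ⟨0, hn⟩ = 0 ∧ a 0 ≤ Qsemi α β C ε h
        ∧ h ∈ {h : Fin n → ℝ | η ≤ osc (fun i => h i - fs i)}} :=
      isCompact_good C hn hm hα hβ hαs hβs hε (a 0)
        (isClosed_le continuous_const hosccont)
    obtain ⟨h0, h0K, h0max⟩ := hK'comp.exists_isMaxOn hK'ne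
      ((cont_Q (α := α) (β := β) (ε := ε) C hn hα).continuousOn)
    have hQ0lt : Qsemi α β C ε h0 < Qsemi α β C ε fs := by
      rcases lt_or_ge (Qsemi α β C ε h0) (Qsemi α β C ε fs) with h | h
      · exact h
      exfalso
      have heq : Qsemi α β C ε h0 = Qsemi α β C ε fs := le_antisymm (hmax h0) h
      have hfix0 : transformG β C ε (transformF α C ε h0) = h0 := by
        apply fixed_of_eq C hn hm hα hβ hαs hβs hε
        rw [heq]
        exact hmax _
      obtain ⟨c, hc⟩ := fixed_unique C hn hm hα hβ hε hfix0 hfix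
      have hconst : (fun i => h0 i - fs i) = fun _ => c := funext fun i => by
        have := hc i; linarith
      obtain ⟨-, -, hosc⟩ := h0K
      simp only [Set.mem_setOf_eq] at hosc
      rw [hconst, osc_const hn] at hosc
      linarith
    have hev : ∀ᶠ k in atTop, Qsemi α β C ε h0 < a k :=
      hT1.eventually (eventually_gt_nhds hQ0lt)
    rw [eventually_atTop] at hev
    obtain ⟨Nk, hNk⟩ := hev
    refine ⟨Nk, fun k hk => ?_⟩
    rw [Real.dist_eq, sub_zero, abs_of_nonneg (osc_nonneg hn _)]
    by_contra hcon
    push_neg at hcon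
    have hmem := hmemK' k hcon
    have hle := h0max hmem
    simp only [Set.mem_setOf_eq] at hle
    rw [hQNk k] at hle
    exact absurd (hNk k hk) (not_lt.2 hle)
  · refine ⟨0, fun k _ => ?_⟩
    rw [Real.dist_eq, sub_zero, abs_of_nonneg (osc_nonneg hn _)]
    by_contra hcon
    push_neg at hcon
    exact hK'ne ⟨_, hmemK' k hcon⟩
end

section
/- Second-order expansion of the (C,ε)-transform: fix f, f₁ : Fin n → ℝ and j ∈ Fin m, and for each j let p_j(i) = α_i exp((f_i + f^{C,ε}(j) − C_{i,j})/ε), which defines probability weights on Fin n. Then the map η ↦ (f + η f₁)^{C,ε}(j) is twice differentiable at η = 0, its first derivative at 0 equals −∑_i p_j(i) f₁_i, and its second derivative at 0 equals −(1/ε)·Var_{p_j}(f₁) = −(1/ε)·( ∑_i p_j(i) f₁_i² − (∑_i p_j(i) f₁_i)² ). -/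
open Real

/-- The probability weights `p_j(i) = αᵢ·exp((fᵢ + f^{C,ε}(j) − C_{ij})/ε)`. -/
noncomputable def pweight {n m : ℕ} (α : Fin n → ℝ) (C : Fin n → Fin m → ℝ)
    (ε : ℝ) (f : Fin n → ℝ) (j : Fin m) (i : Fin n) : ℝ :=
  α i * Real.exp ((f i + transformF α C ε f j - C i j) / ε)

/-- Second-order expansion of the `(C,ε)`-transform: for fixed `f`, `f₁`, `j`,
the map `η ↦ (f + η f₁)^{C,ε}(j)` is twice differentiable at `0`, its first
derivative at `0` is `−∑ᵢ p_j(i) f₁ᵢ`, and its second derivative at `0` is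
`−(1/ε)·Var_{p_j}(f₁)`, where `p_j` are probability weights on `Fin n`. -/
theorem transform_second_order_expansion
    {n m : ℕ} (hn : 0 < n) (hm : 0 < m)
    (α : Fin n → ℝ) (β : Fin m → ℝ)
    (hα : ∀ i, 0 < α i) (hβ : ∀ j, 0 < β j)
    (hαs : ∑ i, α i = 1) (hβs : ∑ j, β j = 1)
    (C : Fin n → Fin m → ℝ) (ε : ℝ) (hε : 0 < ε)
    (f : Fin n → ℝ) (f₁ : Fin n → ℝ) (j : Fin m) :
    (∑ i, pweight α C ε f j i = 1) ∧
    HasDerivAt (fun η : ℝ => transformF α C ε (fun i => f i + η * f₁ i) j)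
      (-∑ i, pweight α C ε f j i * f₁ i) 0 ∧
    HasDerivAt
      (deriv (fun η : ℝ => transformF α C ε (fun i => f i + η * f₁ i) j))
      (-(1 / ε) * ((∑ i, pweight α C ε f j i * f₁ i ^ 2)
        - (∑ i, pweight α C ε f j i * f₁ i) ^ 2)) 0 := by
  have hεne : ε ≠ 0 := ne_of_gt hε
  have : Nonempty (Fin n) := Fin.pos_iff_nonempty.mp hn
  set a : Fin n → ℝ := fun i => α i * Real.exp ((f i - C i j) / ε) with ha
  set S : ℝ → ℝ := fun η => ∑ i, α i * Real.exp ((f i + η * f₁ i - C i j) / ε) with hSdef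
  set T : ℝ → ℝ := fun η => ∑ i, α i * Real.exp ((f i + η * f₁ i - C i j) / ε) * (f₁ i / ε)
    with hTdef
  set U : ℝ → ℝ := fun η => ∑ i, α i * Real.exp ((f i + η * f₁ i - C i j) / ε) * (f₁ i / ε) ^ 2
    with hUdef
  have hSpos : ∀ η, 0 < S η := fun η =>
    Finset.sum_pos (fun i _ => mul_pos (hα i) (Real.exp_pos _)) Finset.univ_nonempty
  have hSne : ∀ η, S η ≠ 0 := fun η => ne_of_gt (hSpos η)
  have hS0 : S 0 = ∑ i, a i := by simp [hSdef, ha]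
  have hexp : ∀ i : Fin n, HasDerivAt
      (fun η : ℝ => α i * Real.exp ((f i + η * f₁ i - C i j) / ε))
      (α i * Real.exp ((f i + 0 * f₁ i - C i j) / ε) * (f₁ i / ε)) 0 := by
    intro i
    have h1 : HasDerivAt (fun η : ℝ => (f i + η * f₁ i - C i j) / ε) (f₁ i / ε) 0 :=
      by simpa using ((((hasDerivAt_id 0).mul_const (f₁ i)).const_add (f i)).sub_const (C i j)).div_const ε
    have := (h1.exp.const_mul (α i))
    refine this.congr_deriv ?_
    ring
  have hSderiv : HasDerivAt S (T 0) 0 := by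
    have := HasDerivAt.fun_sum (fun i (_ : i ∈ Finset.univ) => hexp i)
    simpa [hSdef, hTdef] using this
  have hexp2 : ∀ i : Fin n, HasDerivAt
      (fun η : ℝ => α i * Real.exp ((f i + η * f₁ i - C i j) / ε) * (f₁ i / ε))
      (α i * Real.exp ((f i + 0 * f₁ i - C i j) / ε) * (f₁ i / ε) ^ 2) 0 := by
    intro i
    have := (hexp i).mul_const (f₁ i / ε)
    refine this.congr_deriv ?_
    ring
  have hTderiv : HasDerivAt T (U 0) 0 := by
    have := HasDerivAt.fun_sum (fun i (_ : i ∈ Finset.univ) => hexp2 i)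
    simpa [hTdef, hUdef] using this
  -- derivative of g at any η
  have hSderiv' : ∀ η : ℝ, HasDerivAt S (T η) η := by
    intro η
    apply HasDerivAt.fun_sum
    intro i _
    have h1 : HasDerivAt (fun η : ℝ => (f i + η * f₁ i - C i j) / ε) (f₁ i / ε) η :=
      by simpa using ((((hasDerivAt_id η).mul_const (f₁ i)).const_add (f i)).sub_const (C i j)).div_const ε
    have := (h1.exp.const_mul (α i))
    refine this.congr_deriv ?_
    ring
  have hg : ∀ η : ℝ, HasDerivAt (fun η : ℝ => transformF α C ε (fun i => f i + η * f₁ i) j)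
      (-ε * (T η / S η)) η := by
    intro η
    have := ((hSderiv' η).log (hSne η)).const_mul (-ε)
    simpa [transformF] using this
  -- pweight identity
  have hp : ∀ i, pweight α C ε f j i = a i / S 0 := by
    intro i
    have hL : transformF α C ε f j = -Real.log (S 0) * ε := by
      rw [hS0]
      simp [transformF, ha]
      ring
    unfold pweight
    rw [show f i + transformF α C ε f j - C i j = (f i - C i j) + (-Real.log (S 0) * ε) by
      rw [hL]; ring]
    rw [add_div, mul_div_cancel_right₀ _ hεne, Real.exp_add, Real.exp_neg,
      Real.exp_log (hSpos 0)]
    rw [ha]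
    ring
  -- sums
  have hpsum : ∑ i, pweight α C ε f j i = 1 := by
    rw [Finset.sum_congr rfl (fun i _ => hp i), ← Finset.sum_div, ← hS0, div_self (hSne 0)]
  have hT0 : T 0 = (∑ i, a i * f₁ i) / ε := by
    rw [hTdef, Finset.sum_div]
    apply Finset.sum_congr rfl
    intro i _
    simp [ha]
    ring
  have hU0 : U 0 = (∑ i, a i * f₁ i ^ 2) / ε ^ 2 := by
    rw [hUdef, Finset.sum_div]
    apply Finset.sum_congr rfl
    intro i _
    simp [ha]
    ring
  have hp1 : ∑ i, pweight α C ε f j i * f₁ i = (∑ i, a i * f₁ i) / S 0 := by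
    rw [Finset.sum_div]
    apply Finset.sum_congr rfl
    intro i _
    rw [hp i]; ring
  have hp2 : ∑ i, pweight α C ε f j i * f₁ i ^ 2 = (∑ i, a i * f₁ i ^ 2) / S 0 := by
    rw [Finset.sum_div]
    apply Finset.sum_congr rfl
    intro i _
    rw [hp i]; ring
  refine ⟨hpsum, ?_, ?_⟩
  · have := hg 0
    convert this using 1
    rw [hp1, hT0]
    field_simp
  · have hDeq : deriv (fun η : ℝ => transformF α C ε (fun i => f i + η * f₁ i) j)
        = fun η => -ε * (T η / S η) := funext fun η => (hg η).deriv
    rw [hDeq]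
    have hdiv : HasDerivAt (fun η => T η / S η)
        ((U 0 * S 0 - T 0 * T 0) / (S 0) ^ 2) 0 := hTderiv.div hSderiv (hSne 0)
    have := hdiv.const_mul (-ε)
    refine this.congr_deriv ?_
    rw [hp1, hp2, hT0, hU0]
    have h0 := hSne 0
    field_simp
end
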